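/- Let (R,m) be a one-dimensional Noetherian local ring and q=(x) a parameter ideal. Let l = min{ i : ((x^{n+1}):x^{n}) = ((x^{i+1}):x^{i}) for all n ≥ i } and x̃ = ((x^{l+1}):x^{l}). Then the zeroth Hilbert coefficient satisfies e_0(q) = λ_R(R/x̃). -/

import Mathlib

set_option synthInstance.maxHeartbeats 1000000
set_option maxHeartbeats 1000000

open IsLocalRing Polynomial

/-- The length `λ_R(M)` of an `R`-module `M`, as an integer (the Krull dimension of
its lattice of submodules; for a finite-length module this is the usual length). -/
noncomputable def modLength (R M : Type*) [CommRing R] [AddCommGroup M] [Module R M] : ℤ :=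
  (WithBot.unbotD 0 (Order.krullDim (Submodule R M))).toNat

/-- The binomial coefficient `binom(x, k)` for `x : ℚ`, `k : ℕ`. -/
noncomputable def binomQ (x : ℚ) (k : ℕ) : ℚ :=
  (∏ j ∈ Finset.range k, (x - j)) / (Nat.factorial k)

/-- The function `n ↦ ∑_{i=0}^{d} (-1)^i eᵢ binom(n+d-i-1, d-i)`; when the `e i` are the
Hilbert coefficients of an ideal this is its Hilbert–Samuel polynomial. -/
noncomputable def hilbPoly (d : ℕ) (e : ℕ → ℤ) (n : ℤ) : ℚ :=
  ∑ i ∈ Finset.range (d + 1), (-1 : ℚ) ^ i * (e i) * binomQ ((n : ℚ) + d - i - 1) (d - i)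

/-- The Hilbert function `H_q(n) = λ_R(R/qⁿ)` (with `H_q(n) = 0` for `n ≤ 0`). -/
noncomputable def hilbFn (R : Type*) [CommRing R] (q : Ideal R) (n : ℤ) : ℚ :=
  (modLength R (R ⧸ q ^ n.toNat) : ℚ)

/-- The first difference operator `Δ` on functions `ℤ → ℚ`: `Δ(f)(n) = f(n+1) - f(n)`. -/
noncomputable def deltaFn (f : ℤ → ℚ) : ℤ → ℚ := fun n => f (n + 1) - f n

/-- The colon ideal `((x^{i+1}) : x^i)`. -/
noncomputable def colonPow (R : Type*) [CommRing R] (x : R) (i : ℕ) : Ideal R :=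
  (Ideal.span {x ^ (i + 1)}).colon (Ideal.span {x ^ i})

/-- The length `λ_R(J/I)` of the subquotient `J/I` (for ideals `I ⊆ J`). -/
noncomputable def quotLength (R : Type*) [CommRing R] (J I : Ideal R) : ℤ :=
  modLength R (↥J ⧸ Submodule.comap J.subtype I)

/-- `y` is a superficial element for `I`: there is `c ≥ 0` with
`(I^{n+1} : y) ∩ I^c = I^n` for all `n ≥ c`. -/
def IsSuperficial (R : Type*) [CommRing R] (I : Ideal R) (y : R) : Prop :=
  ∃ c : ℕ, ∀ n ≥ c, (I ^ (n + 1)).colon (Ideal.span {y}) ⊓ I ^ c = I ^ n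

/-- `q` is a parameter ideal of the `d`-dimensional local ring `R`: it is generated by a
system of `d` parameters, i.e. by `d` elements generating an `m`-primary ideal. -/
def IsParameterIdeal (R : Type*) [CommRing R] [IsLocalRing R] (d : ℕ) (q : Ideal R) : Prop :=
  (∃ f : Fin d → R, q = Ideal.span (Set.range f)) ∧ q.radical = maximalIdeal R

/-- `depth R ≥ k`: there is an `R`-regular sequence of length `k` inside the maximal ideal. -/
def depthGE (R : Type*) [CommRing R] [IsLocalRing R] (k : ℕ) : Prop :=
  ∃ rs : List R, rs.length = k ∧ (∀ r ∈ rs, r ∈ maximalIdeal R) ∧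
    RingTheory.Sequence.IsRegular R rs

/-- The ideal `I·R[It]` of the Rees algebra `R[It]`. -/
noncomputable def grKer (R : Type*) [CommRing R] (I : Ideal R) : Ideal (reesAlgebra I) :=
  Ideal.span {x : reesAlgebra I | ∃ a ∈ I, (x : R[X]) = Polynomial.C a}

/-- The associated graded ring `gr_I(R) = ⊕_{n≥0} Iⁿ/Iⁿ⁺¹`, realized as `R[It]/I·R[It]`. -/
noncomputable abbrev grRing (R : Type*) [CommRing R] (I : Ideal R) :=
  reesAlgebra I ⧸ grKer R I

/-- The irrelevant ideal `gr_I(R)₊`, generated by the image `It` of the degree-one part. -/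
noncomputable def grPlus (R : Type*) [CommRing R] (I : Ideal R) : Ideal (grRing R I) :=
  Ideal.span ((Ideal.Quotient.mk (grKer R I)) ''
    {x : reesAlgebra I | ∃ a ∈ I, (x : R[X]) = Polynomial.C a * Polynomial.X})

/-- `depth gr_I(R) = grade gr_I(R)₊ ≥ k`: there is a `gr_I(R)`-regular sequence of
length `k` contained in the irrelevant ideal. -/
def grDepthGE (R : Type*) [CommRing R] (I : Ideal R) (k : ℕ) : Prop :=
  ∃ rs : List (grRing R I), rs.length = k ∧ (∀ r ∈ rs, r ∈ grPlus R I) ∧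
    RingTheory.Sequence.IsRegular (grRing R I) rs

/-!
The sequence `0 → R/((x^{n+1}) : x^n) → R/(x^{n+1}) → R/(x^n) → 0`, whose first map is
multiplication by `x^n`, is exact, so `H_q(n+1) - H_q(n) = λ(R/((x^{n+1}) : x^n))`, which is
`λ(R/x̃)` once `n ≥ l`. For the degree-one Hilbert polynomial that difference is `e₀`.
-/

lemma modLength_eq_toNat_length (R M : Type*) [CommRing R] [AddCommGroup M] [Module R M] :
    modLength R M = (Module.length R M).toNat := by
  rw [modLength, ← Module.coe_length, WithBot.unbotD_coe]

lemma Module.length_quotient_eq_length_quotient_colon_add {R : Type*} [CommRing R]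
    (I : Ideal R) (a : R) :
    Module.length R (R ⧸ I) =
      Module.length R (R ⧸ I.colon (Ideal.span {a})) +
        Module.length R (R ⧸ (I ⊔ Ideal.span {a})) := by
  set N : Submodule R (R ⧸ I) := Submodule.map I.mkQ (Ideal.span {a})
  rw [Module.length_eq_add_of_exact N.subtype N.mkQ N.injective_subtype N.mkQ_surjective
    (LinearMap.exact_subtype_mkQ N), (Submodule.quotientQuotientEquivQuotientSup I _).length_eq]
  congr 1
  have hN : N = R ∙ Submodule.Quotient.mk a := by
    simp [N, Submodule.map_span]
  have htors :
      Ideal.torsionOf R (R ⧸ I) (Submodule.Quotient.mk a) = I.colon (Ideal.span {a}) := by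
    ext r
    rw [Ideal.mem_torsionOf_iff, Submodule.mem_colon_span_singleton, ← Submodule.Quotient.mk_smul,
      Submodule.Quotient.mk_eq_zero]
  rw [← htors, hN]
  exact ((Ideal.quotTorsionOfEquivSpanSingleton R _ _).length_eq).symm

lemma Module.length_quotient_ne_top_of_radical_eq_maximalIdeal {R : Type*} [CommRing R]
    [IsNoetherianRing R] [IsLocalRing R] {I : Ideal R} (hI : I.radical = maximalIdeal R) :
    Module.length R (R ⧸ I) ≠ ⊤ := by
  have : IsArtinianRing (R ⧸ I) := by
    refine IsLocalRing.quotient_artinian_of_mem_minimalPrimes_of_isLocalRing I ?_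
    rw [← Ideal.radical_minimalPrimes, hI, Ideal.minimalPrimes_eq_subsingleton_self]
    rfl
  have : IsArtinian R (R ⧸ I) :=
    isArtinian_of_surjective_algebraMap (Ideal.Quotient.mk_surjective (I := I))
  exact Module.length_ne_top

lemma hilbPoly_one_succ_sub (e : ℕ → ℤ) (n : ℤ) :
    hilbPoly 1 e (n + 1) - hilbPoly 1 e n = e 0 := by
  simp only [hilbPoly, binomQ, Finset.sum_range_succ, Finset.sum_range_zero,
    Finset.prod_range_succ, Finset.prod_range_zero]
  push_cast
  ring

lemma hilbFn_natCast (R : Type*) [CommRing R] (q : Ideal R) (n : ℕ) :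
    hilbFn R q n = modLength R (R ⧸ q ^ n) := by
  rw [hilbFn, Int.toNat_natCast]

lemma modLength_quotient_span_pow_succ {R : Type*} [CommRing R] [IsNoetherianRing R]
    [IsLocalRing R] {x : R} (hx : (Ideal.span {x}).radical = maximalIdeal R) (n : ℕ) :
    modLength R (R ⧸ Ideal.span {x} ^ (n + 1)) =
      modLength R (R ⧸ Ideal.span {x} ^ n) + modLength R (R ⧸ colonPow R x n) := by
  have hfin : Module.length R (R ⧸ Ideal.span {x ^ (n + 1)}) ≠ ⊤ :=
    Module.length_quotient_ne_top_of_radical_eq_maximalIdeal <| by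
      rw [← Ideal.span_singleton_pow, Ideal.radical_pow _ n.succ_ne_zero, hx]
  have hsup : Ideal.span {x ^ (n + 1)} ⊔ Ideal.span {x ^ n} = Ideal.span {x ^ n} :=
    sup_eq_right.2 <| Ideal.span_singleton_le_span_singleton.2 (pow_dvd_pow x n.le_succ)
  rw [Ideal.span_singleton_pow, Ideal.span_singleton_pow, modLength_eq_toNat_length,
    modLength_eq_toNat_length, modLength_eq_toNat_length, colonPow]
  rw [Module.length_quotient_eq_length_quotient_colon_add _ (x ^ n), hsup] at hfin ⊢
  rw [ENat.toNat_add (WithTop.add_ne_top.1 hfin).1 (WithTop.add_ne_top.1 hfin).2]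
  push_cast
  ring

theorem stmt0_general (R : Type*) [CommRing R] [IsNoetherianRing R] [IsLocalRing R] (x : R)
    (hx : (Ideal.span {x}).radical = maximalIdeal R)
    (l : ℕ) (hl : IsLeast {i : ℕ | ∀ n ≥ i, colonPow R x n = colonPow R x i} l)
    (e : ℕ → ℤ)
    (he : ∃ N : ℤ, ∀ n ≥ N, hilbPoly 1 e n = hilbFn R (Ideal.span {x}) n) :
    e 0 = modLength R (R ⧸ colonPow R x l) := by
  obtain ⟨N, hN⟩ := he
  set n := max l N.toNat
  have hnN : N ≤ n := (Int.self_le_toNat N).trans (by exact_mod_cast le_max_right l N.toNat)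
  have hdiff := hilbPoly_one_succ_sub e n
  rw [hN n hnN, hN (n + 1) (by omega), ← Nat.cast_succ, hilbFn_natCast, hilbFn_natCast,
    modLength_quotient_span_pow_succ hx, hl.1 n (le_max_left l N.toNat)] at hdiff
  push_cast at hdiff
  exact_mod_cast (by linarith : (e 0 : ℚ) = modLength R (R ⧸ colonPow R x l))

/-- In a one-dimensional Noetherian local ring with parameter ideal `q = (x)`,
with `l = min{i : ((x^{n+1}):x^n) = ((x^{i+1}):x^i) for all n ≥ i}` and `x̃ = ((x^{l+1}):x^l)`,
the zeroth Hilbert coefficient satisfies `e₀(q) = λ_R(R/x̃)`. -/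
theorem stmt0 (R : Type*) [CommRing R] [IsNoetherianRing R] [IsLocalRing R]
    (hdim : ringKrullDim R = 1) (x : R)
    (hx : (Ideal.span {x}).radical = maximalIdeal R)
    (l : ℕ) (hl : IsLeast {i : ℕ | ∀ n ≥ i, colonPow R x n = colonPow R x i} l)
    (e : ℕ → ℤ)
    (he : ∃ N : ℤ, ∀ n ≥ N, hilbPoly 1 e n = hilbFn R (Ideal.span {x}) n) :
    e 0 = modLength R (R ⧸ colonPow R x l) :=
  stmt0_general R x hx l hl e he
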